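/- arXiv:2411.13300 — 2 statements merged into one kernel-verified Lean document; each statement's English description precedes it below -/
import Mathlib

section
/- Let S ⊆ ℝ^{n−1} and let P ∈ ℝ[x₁,…,x_{n−1};x_n] have degree d_n in x_n, with leading coefficient c_{d_n}(x) (the coefficient of x_n^{d_n}). If c_{d_n} never vanishes on S, then P is projectively delineable on S if and only if P is delineable on S. -/
noncomputable section

open Polynomial Finset

/-- The real projective line `ℝP¹`: the quotient of `ℝ² ∖ {0}` by proportionality. -/
abbrev RP1 : Type := Projectivization ℝ (Fin 2 → ℝ)

/-- The quotient topology on the real projective line. -/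
instance : TopologicalSpace RP1 :=
  inferInstanceAs (TopologicalSpace (Quotient (projectivizationSetoid ℝ (Fin 2 → ℝ))))

/-- Homogenization of a univariate real polynomial with respect to the degree `d`,
as a binary form (an element of `ℝ[x,y]`, homogeneous of degree `d` when `P.natDegree ≤ d`):
`H^d(P)(x,y) = ∑_{k=0}^d c_k x^k y^(d-k)`. -/
def homog (d : ℕ) (P : Polynomial ℝ) : MvPolynomial (Fin 2) ℝ :=
  ∑ k ∈ Finset.range (d + 1),
    MvPolynomial.C (P.coeff k) * MvPolynomial.X 0 ^ k * MvPolynomial.X 1 ^ (d - k)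

/-- The pull-back `ι_M^{*}` of a binary form `g` along the parametrized line
`ι_M : x ↦ M (x,1)ᵀ`, i.e. the univariate polynomial `g(m₁₁ x + m₁₂, m₂₁ x + m₂₂)`.
For `M = 1` this is the standard pull-back `ι^{*d} g = g(x, 1)`. -/
def pullM (M : Matrix (Fin 2) (Fin 2) ℝ) (g : MvPolynomial (Fin 2) ℝ) : Polynomial ℝ :=
  MvPolynomial.eval₂ Polynomial.C
    ![Polynomial.C (M 0 0) * Polynomial.X + Polynomial.C (M 0 1),
      Polynomial.C (M 1 0) * Polynomial.X + Polynomial.C (M 1 1)] g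

/-- Right composition `R_M g = g ∘ M` of a binary form with a linear map of `ℝ²`. -/
def compM (M : Matrix (Fin 2) (Fin 2) ℝ) (g : MvPolynomial (Fin 2) ℝ) : MvPolynomial (Fin 2) ℝ :=
  MvPolynomial.eval₂ MvPolynomial.C
    (fun i => ∑ j, MvPolynomial.C (M i j) * MvPolynomial.X j) g

/-- The operator `A^{*d} P = ι_A^{*d} (H^d P)`, i.e.
`A^{*d}P(x) = ∑_{k=0}^d c_k (a₁₁x+a₁₂)^k (a₂₁x+a₂₂)^{d-k}` for `P = ∑ c_k x^k`. -/
def AstarU (d : ℕ) (M : Matrix (Fin 2) (Fin 2) ℝ) (P : Polynomial ℝ) : Polynomial ℝ :=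
  pullM M (homog d P)

/-- The Sylvester matrix of `P` and `Q` with respect to the fixed degrees `p` and `q`
(padding with zero coefficients as if `deg P = p` and `deg Q = q`). -/
def sylvester {R : Type*} [CommRing R] (p q : ℕ) (P Q : Polynomial R) :
    Matrix (Fin (p + q)) (Fin (p + q)) R := fun i j =>
  if (i : ℕ) < q then
    (if (i : ℕ) ≤ (j : ℕ) ∧ (j : ℕ) ≤ (i : ℕ) + p then P.coeff (p + (i : ℕ) - (j : ℕ)) else 0)
  else
    (if (i : ℕ) - q ≤ (j : ℕ) ∧ (j : ℕ) ≤ (i : ℕ) then Q.coeff (q + ((i : ℕ) - q) - (j : ℕ)) else 0)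

/-- The resultant `Res^{p,q}(P,Q)` with respect to the fixed degrees `p` and `q`:
the determinant of the corresponding Sylvester matrix. -/
def resFixed {R : Type*} [CommRing R] (p q : ℕ) (P Q : Polynomial R) : R :=
  (sylvester p q P Q).det

/-- The discriminant `Disc^p(P)` of `P` with respect to the fixed degree `p`: the resultant
(with respect to degrees `(p-1, p-1)`) of the pull-backs of the two partial derivatives
`F_x`, `F_y` of the binary form `F = H^p(P)`; these pull-backs are `P'` and `p·P − x·P'`. -/
def discFixed {R : Type*} [CommRing R] (p : ℕ) (P : Polynomial R) : R :=
  (-1) ^ (p * (p - 1) / 2) *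
    resFixed (p - 1) (p - 1) (Polynomial.derivative P)
      (Polynomial.C (p : R) * P - Polynomial.X * Polynomial.derivative P)

/-- Evaluation `E_x` of a polynomial in `x₁,…,x_m;x_n` at `x ∈ ℝ^m` in its first `m`
variables, giving a univariate real polynomial in `x_n`. -/
def evalP {m : ℕ} (P : Polynomial (MvPolynomial (Fin m) ℝ)) (x : Fin m → ℝ) : Polynomial ℝ :=
  P.map (MvPolynomial.eval x : MvPolynomial (Fin m) ℝ →+* ℝ)

/-- The operator `A^{*d}` acting on the last variable of a polynomial in `x₁,…,x_m;x_n`: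
`A^{*d}P(x,x_n) = ∑_{k=0}^d c_k(x) (a₁₁x_n+a₁₂)^k (a₂₁x_n+a₂₂)^{d-k}`. -/
def AstarPoly {m : ℕ} (d : ℕ) (M : Matrix (Fin 2) (Fin 2) ℝ)
    (P : Polynomial (MvPolynomial (Fin m) ℝ)) : Polynomial (MvPolynomial (Fin m) ℝ) :=
  ∑ k ∈ Finset.range (d + 1),
    Polynomial.C (P.coeff k) *
      (Polynomial.C (MvPolynomial.C (M 0 0)) * Polynomial.X
        + Polynomial.C (MvPolynomial.C (M 0 1))) ^ k *
      (Polynomial.C (MvPolynomial.C (M 1 0)) * Polynomial.X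
        + Polynomial.C (MvPolynomial.C (M 1 1))) ^ (d - k)

/-- The order of a (polynomial) function at a point: the smallest `k` such that some
partial derivative of total order `k` does not vanish at the point, i.e. the smallest `k`
with `iteratedFDeriv ℝ k f v ≠ 0`; it is `⊤` if all derivatives vanish. -/
def ordAt {E : Type*} [NormedAddCommGroup E] [NormedSpace ℝ E] (f : E → ℝ) (v : E) : ℕ∞ :=
  sInf {k : ℕ∞ | ∃ n : ℕ, k = n ∧ iteratedFDeriv ℝ n f v ≠ 0}

/-- A function is order-invariant on a set if it has the same order at every point of the set. -/
def OrderInvariantOn {E : Type*} [NormedAddCommGroup E] [NormedSpace ℝ E]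
    (f : E → ℝ) (S : Set E) : Prop :=
  ∀ x ∈ S, ∀ y ∈ S, ordAt f x = ordAt f y

/-- `(v 0 : v 1)` is a projective root of the binary form `g` of multiplicity (exactly) `mult`:
in the factorization of `g`, the linear form vanishing on the line through `v` occurs with
exponent `mult`. -/
def HasProjRootOfMult (g : MvPolynomial (Fin 2) ℝ) (v : Fin 2 → ℝ) (mult : ℕ) : Prop :=
  ∃ h : MvPolynomial (Fin 2) ℝ,
    g = (MvPolynomial.C (v 1) * MvPolynomial.X 0 - MvPolynomial.C (v 0) * MvPolynomial.X 1) ^ mult * h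
      ∧ MvPolynomial.eval v h ≠ 0

/-- The projective zero set `Z_{ℝP¹}(P,S)` of `P` over `S`, with respect to the degree `d`
in the last variable: the set of `(x, (x_n : y))` with `x ∈ S` and `H^d(P)(x,(x_n,y)) = 0`. -/
def ZProj {m : ℕ} (d : ℕ) (P : Polynomial (MvPolynomial (Fin m) ℝ)) (S : Set (Fin m → ℝ)) :
    Set ((Fin m → ℝ) × RP1) :=
  {p | p.1 ∈ S ∧ ∃ (v : Fin 2 → ℝ) (hv : v ≠ 0),
    Projectivization.mk ℝ v hv = p.2 ∧ MvPolynomial.eval v (homog d (evalP P p.1)) = 0}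

/-- `θ` is a (finite) system of real root functions for `P` on `S`: continuous functions with
pairwise disjoint graphs whose union is `Z_ℝ(P,S)`, each of constant positive multiplicity. -/
def IsRealRootFunctions {m : ℕ} (P : Polynomial (MvPolynomial (Fin m) ℝ)) (S : Set (Fin m → ℝ))
    {k : ℕ} (θ : Fin k → (Fin m → ℝ) → ℝ) : Prop :=
  (∀ l, ContinuousOn (θ l) S) ∧
  (∀ x ∈ S, ∀ l l' : Fin k, l ≠ l' → θ l x ≠ θ l' x) ∧
  (∀ x ∈ S, ∀ t : ℝ, (evalP P x).eval t = 0 ↔ ∃ l, θ l x = t) ∧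
  (∀ l : Fin k, ∃ mult : ℕ, 0 < mult ∧ ∀ x ∈ S, (evalP P x).rootMultiplicity (θ l x) = mult)

/-- `P` is delineable on `S`. -/
def Delineable {m : ℕ} (P : Polynomial (MvPolynomial (Fin m) ℝ)) (S : Set (Fin m → ℝ)) : Prop :=
  ∃ (k : ℕ) (θ : Fin k → (Fin m → ℝ) → ℝ), IsRealRootFunctions P S θ

/-- `θ` is a (finite) system of projective root functions for `P` on `S` with respect to the
degree `d` in the last variable: continuous functions into `ℝP¹` with pairwise disjoint graphs
whose union is `Z_{ℝP¹}(P,S)`, each of constant positive multiplicity. -/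
def IsProjRootFunctions {m : ℕ} (d : ℕ) (P : Polynomial (MvPolynomial (Fin m) ℝ))
    (S : Set (Fin m → ℝ)) {k : ℕ} (θ : Fin k → (Fin m → ℝ) → RP1) : Prop :=
  (∀ l, ContinuousOn (θ l) S) ∧
  (∀ x ∈ S, ∀ l l' : Fin k, l ≠ l' → θ l x ≠ θ l' x) ∧
  (∀ x ∈ S, ∀ (v : Fin 2 → ℝ) (hv : v ≠ 0),
    (MvPolynomial.eval v (homog d (evalP P x)) = 0 ↔ ∃ l, θ l x = Projectivization.mk ℝ v hv)) ∧
  (∀ l : Fin k, ∃ mult : ℕ, 0 < mult ∧ ∀ x ∈ S, ∀ (v : Fin 2 → ℝ) (hv : v ≠ 0),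
    θ l x = Projectivization.mk ℝ v hv → HasProjRootOfMult (homog d (evalP P x)) v mult)

/-- `P` is projectively delineable on `S` (with respect to the degree `d` in the last variable). -/
def ProjDelineable {m : ℕ} (d : ℕ) (P : Polynomial (MvPolynomial (Fin m) ℝ))
    (S : Set (Fin m → ℝ)) : Prop :=
  ∃ (k : ℕ) (θ : Fin k → (Fin m → ℝ) → RP1), IsProjRootFunctions d P S θ

/-- `S` is an analytic submanifold of `ℝ^m`: around each of its points, in suitable
real-analytic coordinates, `S` is an open piece of a linear subspace. -/
def IsAnalyticSubmanifold {m : ℕ} (S : Set (Fin m → ℝ)) : Prop :=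
  ∀ s ∈ S, ∃ (U V : Set (Fin m → ℝ)) (φ ψ : (Fin m → ℝ) → (Fin m → ℝ))
      (L : Submodule ℝ (Fin m → ℝ)),
    IsOpen U ∧ IsOpen V ∧ s ∈ U ∧
    AnalyticOnNhd ℝ φ U ∧ AnalyticOnNhd ℝ ψ V ∧
    Set.MapsTo φ U V ∧ Set.MapsTo ψ V U ∧
    Set.EqOn (ψ ∘ φ) id U ∧ Set.EqOn (φ ∘ ψ) id V ∧
    φ '' (U ∩ S) = V ∩ (L : Set (Fin m → ℝ))

end

/-!
Where the leading coefficient `c_d(x)` does not vanish, `H^d(P)(x, (1, 0)) = c_d(x) ≠ 0`, so `∞` is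
never a projective root: all projective roots lie in the affine chart `t ↦ (t : 1)`, on which
`H^d(P)(x, (t, 1)) = P(x, t)`. Homogenization is multiplicative, so `P(x, ·) = (X - t)^μ W` with
`W(t) ≠ 0` gives `H^d(P)(x, ·) = (X₀ - t X₁)^μ H^{d-μ}(W)` with `H^{d-μ}(W)(t, 1) ≠ 0`: projective
and affine multiplicities agree. Since the chart is continuous with an inverse that is continuous
on its image, root functions transfer in both directions.
-/

open Polynomial

section Homogenization

variable {d : ℕ} {Q : ℝ[X]} {v : Fin 2 → ℝ}

lemma eval_homog :
    MvPolynomial.eval v (homog d Q) =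
      ∑ k ∈ Finset.range (d + 1), Q.coeff k * v 0 ^ k * v 1 ^ (d - k) := by
  simp [homog]

lemma eval_homog_of_ne_zero (hv : v 1 ≠ 0) (hQ : Q.natDegree ≤ d) :
    MvPolynomial.eval v (homog d Q) = v 1 ^ d * Q.eval (v 0 / v 1) := by
  rw [eval_homog, eval_eq_sum_range' (Nat.lt_succ_of_le hQ), Finset.mul_sum]
  refine Finset.sum_congr rfl fun k hk => ?_
  rw [← pow_mul_pow_sub (v 1) (Nat.lt_succ_iff.1 (Finset.mem_range.1 hk)), div_pow]
  field_simp

lemma eval_homog_of_eq_zero (hv : v 1 = 0) :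
    MvPolynomial.eval v (homog d Q) = Q.coeff d * v 0 ^ d := by
  rw [eval_homog, Finset.sum_eq_single_of_mem d (Finset.self_mem_range_succ d)]
  · simp
  · intro k hk hkd
    rw [Finset.mem_range] at hk
    rw [hv, zero_pow (by omega), mul_zero]

lemma eval_homog_affine (t : ℝ) (hQ : Q.natDegree ≤ d) :
    MvPolynomial.eval ![t, 1] (homog d Q) = Q.eval t := by
  simp [eval_homog_of_ne_zero (v := ![t, 1]) one_ne_zero hQ]

lemma homog_mul {a b : ℕ} {P₁ P₂ : ℝ[X]} (h₁ : P₁.natDegree ≤ a) (h₂ : P₂.natDegree ≤ b) :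
    homog (a + b) (P₁ * P₂) = homog a P₁ * homog b P₂ := by
  refine MvPolynomial.funext fun v => ?_
  rw [map_mul]
  by_cases hv : v 1 = 0
  · rw [eval_homog_of_eq_zero hv, eval_homog_of_eq_zero hv, eval_homog_of_eq_zero hv,
      coeff_mul_add_eq_of_natDegree_le h₁ h₂]
    ring
  · rw [eval_homog_of_ne_zero hv (natDegree_mul_le_of_le h₁ h₂), eval_homog_of_ne_zero hv h₁,
      eval_homog_of_ne_zero hv h₂, eval_mul]
    ring

lemma homog_pow {a : ℕ} {P : ℝ[X]} (hP : P.natDegree ≤ a) (n : ℕ) :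
    homog (n * a) (P ^ n) = homog a P ^ n := by
  induction n with
  | zero => simp [homog]
  | succ n ih =>
    rw [pow_succ, pow_succ, add_one_mul,
      homog_mul (natDegree_pow_le_of_le n hP) hP, ih]

lemma homog_X_sub_C (r : ℝ) :
    homog 1 (X - C r) = MvPolynomial.X 0 - MvPolynomial.C r * MvPolynomial.X 1 := by
  simp [homog, Finset.sum_range_succ, coeff_C, sub_eq_neg_add]

end Homogenization

noncomputable section

namespace RP1

def affine (t : ℝ) : RP1 := Projectivization.mk ℝ ![t, 1] (by simp)

lemma affine_eq_mk_iff {t : ℝ} {v : Fin 2 → ℝ} (hv : v ≠ 0) :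
    affine t = Projectivization.mk ℝ v hv ↔ v 1 ≠ 0 ∧ v 0 / v 1 = t := by
  rw [affine, Projectivization.mk_eq_mk_iff']
  constructor
  · rintro ⟨a, ha⟩
    have h0 : a * v 0 = t := by simpa using congrFun ha 0
    have h1 : a * v 1 = 1 := by simpa using congrFun ha 1
    have hv1 : v 1 ≠ 0 := right_ne_zero_of_mul_eq_one h1
    refine ⟨hv1, ?_⟩
    rw [← h0, eq_inv_of_mul_eq_one_left h1, div_eq_inv_mul]
  · rintro ⟨hv1, rfl⟩
    refine ⟨(v 1)⁻¹, ?_⟩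
    ext i
    fin_cases i <;> simp [hv1, div_eq_inv_mul]

lemma affine_injective : Function.Injective affine := fun s t h => by
  simpa using ((affine_eq_mk_iff (v := ![t, 1]) (by simp)).1 h).2.symm

lemma continuous_affine : Continuous affine :=
  continuous_quotient_mk'.comp (Continuous.subtype_mk (by fun_prop) _)

def chart : RP1 → ℝ :=
  Projectivization.lift (fun v => v.1 0 / v.1 1) fun v w t h => by
    have ht : t ≠ 0 := by
      rintro rfl
      exact v.2 (by simp [h])
    simp [h, mul_div_mul_left _ _ ht]

lemma chart_affine (t : ℝ) : chart (affine t) = t := by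
  simp [chart, affine]

lemma continuousOn_chart : ContinuousOn chart (Set.range affine) := by
  have hq : Topology.IsQuotientMap (Projectivization.mk' ℝ : {v : Fin 2 → ℝ // v ≠ 0} → RP1) :=
    isQuotientMap_quotient_mk'
  rw [continuousOn_iff']
  intro s hs
  refine ⟨chart ⁻¹' s ∩ Set.range affine, hq.isOpen_preimage.1 ?_,
    by rw [Set.inter_assoc, Set.inter_self]⟩
  have hpre : Projectivization.mk' ℝ ⁻¹' (chart ⁻¹' s ∩ Set.range affine) =
      {w : {v : Fin 2 → ℝ // v ≠ 0} | w.1 1 ≠ 0} ∩ (fun w => w.1 0 / w.1 1) ⁻¹' s := by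
    ext ⟨w, hw⟩
    simp [affine_eq_mk_iff, chart, and_comm]
  have hcoord (i : Fin 2) : Continuous fun w : {v : Fin 2 → ℝ // v ≠ 0} => w.1 i :=
    (continuous_apply i).comp continuous_subtype_val
  rw [hpre]
  exact ((hcoord 0).continuousOn.div (hcoord 1).continuousOn fun w hw => hw).isOpen_inter_preimage
    (isOpen_ne_fun (hcoord 1) continuous_const) hs

end RP1

end

section ProjectiveRoots

variable {d : ℕ} {Q : ℝ[X]} {v : Fin 2 → ℝ}

lemma HasProjRootOfMult.unique {g : MvPolynomial (Fin 2) ℝ} (hv : v ≠ 0) {a b : ℕ}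
    (ha : HasProjRootOfMult g v a) (hb : HasProjRootOfMult g v b) : a = b := by
  wlog hab : a ≤ b generalizing a b
  · exact (this hb ha (le_of_not_ge hab)).symm
  obtain ⟨h, rfl, hh⟩ := ha
  obtain ⟨h', hg, -⟩ := hb
  set L : MvPolynomial (Fin 2) ℝ :=
    MvPolynomial.C (v 1) * MvPolynomial.X 0 - MvPolynomial.C (v 0) * MvPolynomial.X 1
  have hL : L ≠ 0 := by
    intro hL0
    apply hv
    ext i
    fin_cases i
    · simpa [L] using congrArg (MvPolynomial.eval ![0, -1]) hL0
    · simpa [L] using congrArg (MvPolynomial.eval ![1, 0]) hL0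
  have hLv : MvPolynomial.eval v L = 0 := by simp [L, mul_comm]
  refine hab.eq_of_not_lt fun hlt => hh ?_
  rw [← Nat.add_sub_cancel' hab, pow_add, mul_assoc] at hg
  rw [mul_left_cancel₀ (pow_ne_zero a hL) hg, map_mul, map_pow, hLv, zero_pow (by omega),
    zero_mul]

lemma hasProjRootOfMult_homog_rootMultiplicity (hQ : Q.degree = d) (hv : v 1 ≠ 0) :
    HasProjRootOfMult (homog d Q) v (Q.rootMultiplicity (v 0 / v 1)) := by
  set r := v 0 / v 1
  set m := Q.rootMultiplicity r
  have hQ0 : Q ≠ 0 := by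
    rintro rfl
    simp at hQ
  obtain ⟨W, hQW, hWr⟩ : ∃ W, Q = (X - C r) ^ m * W ∧ W.eval r ≠ 0 :=
    ⟨_, (pow_mul_divByMonic_rootMultiplicity_eq Q r).symm,
      eval_divByMonic_pow_rootMultiplicity_ne_zero r hQ0⟩
  have hW0 : W ≠ 0 := by
    rintro rfl
    simp at hWr
  have hdW : d = m * 1 + W.natDegree := by
    rw [← natDegree_eq_of_degree_eq_some hQ, hQW,
      natDegree_mul (pow_ne_zero _ (X_sub_C_ne_zero r)) hW0, natDegree_pow, natDegree_X_sub_C]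
  have hL : (MvPolynomial.C (v 1) * MvPolynomial.X 0 - MvPolynomial.C (v 0) * MvPolynomial.X 1 :
      MvPolynomial (Fin 2) ℝ) =
        MvPolynomial.C (v 1) * (MvPolynomial.X 0 - MvPolynomial.C r * MvPolynomial.X 1) := by
    rw [mul_sub, ← mul_assoc, ← map_mul, mul_div_cancel₀ _ hv]
  refine ⟨MvPolynomial.C (v 1 ^ m)⁻¹ * homog W.natDegree W, ?_, ?_⟩
  · calc homog d Q = homog (m * 1) ((X - C r) ^ m) * homog W.natDegree W := by
          rw [hdW, hQW, homog_mul (natDegree_pow_le_of_le m (natDegree_X_sub_C r).le) le_rfl]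
      _ = (MvPolynomial.X 0 - MvPolynomial.C r * MvPolynomial.X 1) ^ m * homog W.natDegree W := by
          rw [homog_pow (natDegree_X_sub_C r).le, homog_X_sub_C]
      _ = _ := by
          rw [hL, mul_pow, ← map_pow, mul_mul_mul_comm, ← map_mul,
            mul_inv_cancel₀ (pow_ne_zero m hv), map_one, one_mul]
  · rw [map_mul, MvPolynomial.eval_C, eval_homog_of_ne_zero hv le_rfl]
    exact mul_ne_zero (inv_ne_zero (pow_ne_zero m hv)) (mul_ne_zero (pow_ne_zero _ hv) hWr)

lemma hasProjRootOfMult_homog_iff (hQ : Q.degree = d) (hv : v 1 ≠ 0) {m : ℕ} :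
    HasProjRootOfMult (homog d Q) v m ↔ Q.rootMultiplicity (v 0 / v 1) = m := by
  refine ⟨(hasProjRootOfMult_homog_rootMultiplicity hQ hv).unique ?_, fun h =>
    h ▸ hasProjRootOfMult_homog_rootMultiplicity hQ hv⟩
  rintro rfl
  exact hv rfl

lemma eval_homog_eq_zero_iff (hQ : Q.degree = d) (hv : v ≠ 0) :
    MvPolynomial.eval v (homog d Q) = 0 ↔
      ∃ t, Q.eval t = 0 ∧ RP1.affine t = Projectivization.mk ℝ v hv := by
  simp_rw [RP1.affine_eq_mk_iff]
  by_cases hv1 : v 1 = 0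
  · have hv0 : v 0 ≠ 0 := fun hv0 => hv (by ext i; fin_cases i <;> assumption)
    simp [eval_homog_of_eq_zero hv1, hv1, hv0, coeff_ne_zero_of_eq_degree hQ]
  · simp [eval_homog_of_ne_zero hv1 (natDegree_le_of_degree_le hQ.le), hv1]

end ProjectiveRoots

section Delineability

variable {m d : ℕ} {P : Polynomial (MvPolynomial (Fin m) ℝ)} {S : Set (Fin m → ℝ)} {k : ℕ}

lemma degree_evalP {x : Fin m → ℝ} (hdeg : P.natDegree = d)
    (hx : MvPolynomial.eval x (P.coeff d) ≠ 0) : (evalP P x).degree = d := by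
  have hP : P ≠ 0 := by
    rintro rfl
    simp at hx
  rw [evalP, degree_map_eq_of_leadingCoeff_ne_zero _ (by rwa [leadingCoeff, hdeg]),
    degree_eq_natDegree hP, hdeg]

lemma IsProjRootFunctions.isRealRootFunctions {θ : Fin k → (Fin m → ℝ) → RP1}
    (hQ : ∀ x ∈ S, (evalP P x).degree = d) (hθ : IsProjRootFunctions d P S θ) :
    IsRealRootFunctions P S fun l x => RP1.chart (θ l x) := by
  obtain ⟨hcont, hdisj, hzero, hmult⟩ := hθ
  have haffine : ∀ x ∈ S, ∀ l, RP1.affine (RP1.chart (θ l x)) = θ l x := by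
    intro x hx l
    obtain ⟨t, -, ht⟩ := (eval_homog_eq_zero_iff (hQ x hx) (θ l x).rep_nonzero).1
      ((hzero x hx _ _).2 ⟨l, (θ l x).mk_rep.symm⟩)
    rw [← (θ l x).mk_rep, ← ht, RP1.chart_affine]
  have hchart : ∀ x ∈ S, ∀ l t, θ l x = RP1.affine t ↔ RP1.chart (θ l x) = t := by
    intro x hx l t
    exact ⟨fun h => h ▸ RP1.chart_affine t, fun h => h ▸ (haffine x hx l).symm⟩
  refine ⟨fun l => RP1.continuousOn_chart.comp (hcont l) fun x hx => ⟨_, haffine x hx l⟩,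
    fun x hx l l' hll' h => hdisj x hx l l' hll' ?_, fun x hx t => ?_, fun l => ?_⟩
  · rw [← haffine x hx l, ← haffine x hx l']
    exact congrArg RP1.affine h
  · have hdeg := natDegree_le_of_degree_le (hQ x hx).le
    rw [← eval_homog_affine t hdeg, hzero x hx _ (by simp)]
    exact exists_congr fun l => hchart x hx l t
  · obtain ⟨mult, hpos, hm⟩ := hmult l
    refine ⟨mult, hpos, fun x hx => ?_⟩
    have hroot := hm x hx _ _ ((hchart x hx l _).2 rfl)
    simpa using (hasProjRootOfMult_homog_iff (hQ x hx) (by simp)).1 hroot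

lemma IsRealRootFunctions.isProjRootFunctions {θ : Fin k → (Fin m → ℝ) → ℝ}
    (hQ : ∀ x ∈ S, (evalP P x).degree = d) (hθ : IsRealRootFunctions P S θ) :
    IsProjRootFunctions d P S fun l x => RP1.affine (θ l x) := by
  obtain ⟨hcont, hdisj, hzero, hmult⟩ := hθ
  refine ⟨fun l => RP1.continuous_affine.comp_continuousOn (hcont l),
    fun x hx l l' hll' h => hdisj x hx l l' hll' (RP1.affine_injective h),
    fun x hx v hv => ?_, fun l => ?_⟩
  · rw [eval_homog_eq_zero_iff (hQ x hx) hv]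
    constructor
    · rintro ⟨t, ht, htv⟩
      obtain ⟨l, rfl⟩ := (hzero x hx t).1 ht
      exact ⟨l, htv⟩
    · rintro ⟨l, hl⟩
      exact ⟨θ l x, (hzero x hx _).2 ⟨l, rfl⟩, hl⟩
  · obtain ⟨mult, hpos, hm⟩ := hmult l
    refine ⟨mult, hpos, fun x hx v hv hl => ?_⟩
    obtain ⟨hv1, hvt⟩ := (RP1.affine_eq_mk_iff hv).1 hl
    rw [hasProjRootOfMult_homog_iff (hQ x hx) hv1, hvt, hm x hx]

end Delineability

/-- Let `S ⊆ ℝ^m` and `P` of degree `d_n` in `x_n` with leading coefficient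
`c_{d_n}`. If `c_{d_n}` never vanishes on `S`, then `P` is projectively delineable on `S`
iff `P` is delineable on `S`. -/
theorem projDelineable_iff_delineable_of_lc_ne_zero (m dn : ℕ)
    (P : Polynomial (MvPolynomial (Fin m) ℝ)) (hdeg : P.natDegree = dn)
    (S : Set (Fin m → ℝ))
    (hc : ∀ x ∈ S, MvPolynomial.eval x (P.coeff dn) ≠ 0) :
    ProjDelineable dn P S ↔ Delineable P S := by
  have hQ : ∀ x ∈ S, (evalP P x).degree = dn := fun x hx => degree_evalP hdeg (hc x hx)
  exact ⟨fun ⟨k, _, hθ⟩ => ⟨k, _, hθ.isRealRootFunctions hQ⟩,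
    fun ⟨k, _, hθ⟩ => ⟨k, _, hθ.isProjRootFunctions hQ⟩⟩
end

section
/- Let P ∈ ℝ[x₁,…,x_{n−1};x_n] be a nonzero polynomial of degree d_n in x_n and A ∈ GL(2,ℝ). Then for all x ∈ ℝ^{n−1} and (x_n,y) ∈ ℝ²∖{(0,0)}, the order of H^{d_n}(A^{*d_n}P) at (x,(x_n,y)) equals the order of H^{d_n}(P) at (x, A(x_n,y)ᵀ). -/
/-! `H^d(Q) ∘ A` is a binary form of degree `d` whose dehomogenization at `y = 1` is `A^{*d}Q`;
since a form of degree `d` is the degree-`d` homogenization of its dehomogenization,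
`H^d(A^{*d}Q) = H^d(Q) ∘ A`. Hence `H^d(A^{*d}P) = H^d(P) ∘ (id × A)` as functions on
`ℝ^m × ℝ²`, and the order at a point is invariant under composition with a linear isomorphism,
whose iterated derivatives are obtained by composing with it. -/

theorem homog_eq_homogenize (d : ℕ) (Q : Polynomial ℝ) : homog d Q = Q.homogenize d := by
  rw [homog, Polynomial.homogenize, Finset.Nat.sum_antidiagonal_eq_sum_range_succ_mk]
  refine Finset.sum_congr rfl fun k _ => ?_
  simp [MvPolynomial.monomial_eq, Finsupp.prod_fintype, Fin.prod_univ_two, mul_assoc]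

theorem isHomogeneous_homog (d : ℕ) (Q : Polynomial ℝ) : (homog d Q).IsHomogeneous d := by
  rw [homog_eq_homogenize]
  exact Q.isHomogeneous_homogenize

theorem isHomogeneous_compM (M : Matrix (Fin 2) (Fin 2) ℝ) {g : MvPolynomial (Fin 2) ℝ} {d : ℕ}
    (hg : g.IsHomogeneous d) : (compM M g).IsHomogeneous d := by
  have h := hg.eval₂ MvPolynomial.C _ (fun r => MvPolynomial.isHomogeneous_C _ r) fun i =>
    MvPolynomial.IsHomogeneous.sum Finset.univ _ 1 fun j _ =>
      (MvPolynomial.isHomogeneous_X ℝ j).C_mul (M i j)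
  rwa [one_mul] at h

theorem aeval_X_one_compM (M : Matrix (Fin 2) (Fin 2) ℝ) (g : MvPolynomial (Fin 2) ℝ) :
    MvPolynomial.aeval ![Polynomial.X, 1] (compM M g) = pullM M g := by
  rw [MvPolynomial.aeval_eq_eval₂Hom, compM, MvPolynomial.eval₂_comp_left, pullM]
  congr 1
  · ext r
    simp [Polynomial.algebraMap_eq]
  · ext i : 1
    fin_cases i <;> simp [Fin.sum_univ_two]

theorem homog_pullM (M : Matrix (Fin 2) (Fin 2) ℝ) {g : MvPolynomial (Fin 2) ℝ} {d : ℕ}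
    (hg : g.IsHomogeneous d) : homog d (pullM M g) = compM M g := by
  rw [homog_eq_homogenize]
  exact Polynomial.homogenize_eq_of_isHomogeneous (isHomogeneous_compM M hg)
    (aeval_X_one_compM M g)

theorem homog_AstarU (d : ℕ) (M : Matrix (Fin 2) (Fin 2) ℝ) (Q : Polynomial ℝ) :
    homog d (AstarU d M Q) = compM M (homog d Q) :=
  homog_pullM M (isHomogeneous_homog d Q)

theorem eval_compM (M : Matrix (Fin 2) (Fin 2) ℝ) (g : MvPolynomial (Fin 2) ℝ) (v : Fin 2 → ℝ) :
    MvPolynomial.eval v (compM M g) = MvPolynomial.eval (M.mulVec v) g := by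
  rw [compM, MvPolynomial.eval₂_comp_left, MvPolynomial.eval, MvPolynomial.coe_eval₂Hom]
  congr 1
  · ext r
    simp
  · ext i
    simp [Matrix.mulVec, dotProduct]

theorem evalP_AstarPoly {m : ℕ} (d : ℕ) (M : Matrix (Fin 2) (Fin 2) ℝ)
    (P : Polynomial (MvPolynomial (Fin m) ℝ)) (x : Fin m → ℝ) :
    evalP (AstarPoly d M P) x = AstarU d M (evalP P x) := by
  simp [evalP, AstarPoly, AstarU, pullM, homog, Polynomial.map_sum]

theorem ordAt_comp_continuousLinearEquiv {E F : Type*} [NormedAddCommGroup E] [NormedSpace ℝ E]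
    [NormedAddCommGroup F] [NormedSpace ℝ F] (e : E ≃L[ℝ] F) (f : F → ℝ) (x : E) :
    ordAt (f ∘ e) x = ordAt f (e x) := by
  have h (n : ℕ) : iteratedFDeriv ℝ n (f ∘ e) x =
      ContinuousLinearEquiv.continuousMultilinearMapCongrLeft ℝ (fun _ : Fin n => e)
        (iteratedFDeriv ℝ n f (e x)) := by
    simpa [iteratedFDerivWithin_univ] using
      e.iteratedFDerivWithin_comp_right f uniqueDiffOn_univ (Set.mem_univ (e x)) n
  simp only [ordAt, h, ne_eq, EmbeddingLike.map_eq_zero_iff]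

theorem order_homog_AstarPoly_general (m dn : ℕ)
    (P : Polynomial (MvPolynomial (Fin m) ℝ))
    (A : GL (Fin 2) ℝ) (x : Fin m → ℝ) (v : Fin 2 → ℝ) :
    ordAt (fun p : (Fin m → ℝ) × (Fin 2 → ℝ) =>
        MvPolynomial.eval p.2
          (homog dn (evalP (AstarPoly dn (A : Matrix (Fin 2) (Fin 2) ℝ) P) p.1))) (x, v)
      = ordAt (fun p : (Fin m → ℝ) × (Fin 2 → ℝ) =>
          MvPolynomial.eval p.2 (homog dn (evalP P p.1)))
          (x, (A : Matrix (Fin 2) (Fin 2) ℝ).mulVec v) := by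
  let T : ((Fin m → ℝ) × (Fin 2 → ℝ)) ≃L[ℝ] ((Fin m → ℝ) × (Fin 2 → ℝ)) :=
    (ContinuousLinearEquiv.refl ℝ (Fin m → ℝ)).prodCongr
      (Matrix.GeneralLinearGroup.toLin A).toLinearEquiv.toContinuousLinearEquiv
  have hT (p : (Fin m → ℝ) × (Fin 2 → ℝ)) :
      T p = (p.1, (A : Matrix (Fin 2) (Fin 2) ℝ).mulVec p.2) := by
    simp [T, Matrix.GeneralLinearGroup.toLin]
  have hF : (fun p : (Fin m → ℝ) × (Fin 2 → ℝ) =>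
        MvPolynomial.eval p.2
          (homog dn (evalP (AstarPoly dn (A : Matrix (Fin 2) (Fin 2) ℝ) P) p.1)))
      = (fun p : (Fin m → ℝ) × (Fin 2 → ℝ) =>
          MvPolynomial.eval p.2 (homog dn (evalP P p.1))) ∘ T := by
    funext p
    rw [Function.comp_apply, hT, evalP_AstarPoly, homog_AstarU, eval_compM]
  rw [hF, ordAt_comp_continuousLinearEquiv, hT]

/-- Let `P` be a nonzero polynomial in `x₁,…,x_m;x_n` of degree `d_n` in
`x_n` and `A ∈ GL(2,ℝ)`. Then for all `x ∈ ℝ^m` and `(x_n,y) ≠ (0,0)`, the order of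
`H^{d_n}(A^{*d_n}P)` at `(x,(x_n,y))` equals the order of `H^{d_n}(P)` at `(x, A(x_n,y)ᵀ)`. -/
theorem order_homog_AstarPoly (m dn : ℕ)
    (P : Polynomial (MvPolynomial (Fin m) ℝ)) (hP : P ≠ 0) (hdeg : P.natDegree = dn)
    (A : GL (Fin 2) ℝ) (x : Fin m → ℝ) (v : Fin 2 → ℝ) (hv : v ≠ 0) :
    ordAt (fun p : (Fin m → ℝ) × (Fin 2 → ℝ) =>
        MvPolynomial.eval p.2
          (homog dn (evalP (AstarPoly dn (A : Matrix (Fin 2) (Fin 2) ℝ) P) p.1))) (x, v)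
      = ordAt (fun p : (Fin m → ℝ) × (Fin 2 → ℝ) =>
          MvPolynomial.eval p.2 (homog dn (evalP P p.1)))
          (x, (A : Matrix (Fin 2) (Fin 2) ℝ).mulVec v) :=
  order_homog_AstarPoly_general m dn P A x v
end
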